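/- Let α be a finite type with N elements, let k and n be integers with 1 ≤ k ≤ n ≤ N, and set t = ⌊n/k⌋. For each integer q ≥ 1 consider the process: sample C uniformly from the size-n subsets of α; then, independently for each j = 1, …, q, sample I_{j,1}, …, I_{j,t} uniformly and independently from the size-k subsets of Fin N, sample g_j uniformly from the set of injective functions from ⋃_{i=1}^t I_{j,i} to C, and set S_{j,i} = g_j '' I_{j,i}. Let H be a nonempty class of {0,1}-valued hypotheses f : Finset α → ℝ with finite VC dimension (with respect to size-k subsets of α). Then: E[ sup_{f ∈ H} | Q_k(Finset.univ, f) − Q_k(C, f) | ] ≤ limsup_{q → ∞} E[ sup_{f ∈ H} | Q_k(Finset.univ, f) − (1/(q·t)) · ∑_{j=1}^q ∑_{i=1}^t f(S_{j,i}) | ]. -/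

import Mathlib

/-!
Conditionally on `C`, every block `g_j '' I_{j,i}` is a uniformly random size-`k` subset of
`C`: postcomposing the uniform injection `g_j` with a permutation of `α` that preserves `C` does
not change its law, and these permutations act transitively on the size-`k` subsets of `C`.
Hence the block estimate is an unbiased estimator of `Q_k(C, f)` for every `f`, so
`|Q_k(univ, f) - Q_k(C, f)|` is at most the expected deviation of the block estimate, and so at
most the expected supremum over `H`. Averaging over `C` gives the bound for every `q ≥ 1`, hence
for the `limsup`.
-/

open scoped ENNReal

/-- The average of `f` over all size-`k` subsets of `C`: the probability `Q_{Υ,k}(f)` that a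
uniformly random size-`k` fragment of the relational example with domain `C` satisfies `f`. -/
noncomputable def Qk {α : Type*} [DecidableEq α] (k : ℕ) (C : Finset α) (f : Finset α → ℝ) : ℝ :=
  ((C.card.choose k : ℝ))⁻¹ * ∑ S ∈ C.powersetCard k, f S

/-- `H` shatters the collection `X` of size-`k` subsets of `α`: every `S ∈ X` has cardinality `k`,
and for every `Y ⊆ X` there is `f ∈ H` taking value `1` on `Y` and `0` on `X \ Y`. -/
def Shatters {α : Type*} [DecidableEq α] (k : ℕ)
    (H : Set (Finset α → ℝ)) (X : Finset (Finset α)) : Prop :=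
  (∀ S ∈ X, S.card = k) ∧
    ∀ Y ⊆ X, ∃ f ∈ H, (∀ S ∈ Y, f S = 1) ∧ ∀ S ∈ X \ Y, f S = 0

/-- The VC dimension of `H` with respect to size-`k` subsets of `α` equals `d`: `d` is the largest
cardinality of a collection of size-`k` subsets shattered by `H`. -/
def VCDimEq {α : Type*} [DecidableEq α] (k : ℕ) (H : Set (Finset α → ℝ)) (d : ℕ) : Prop :=
  IsGreatest {m : ℕ | ∃ X : Finset (Finset α), Shatters k H X ∧ X.card = m} d

/-- The sampling process of Lemma 1 of the paper (with `q` repetitions), as a `PMF` built with the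
`PMF` monad from uniform distributions: sample a size-`n` subset `C` of `α` uniformly; then,
independently for each `j`, sample size-`k` subsets `I_{j,1}, …, I_{j,t}` of `Fin (card α)`
uniformly and independently, sample an injective function `g_j` from `⋃ᵢ I_{j,i}` to `C`
uniformly, and set `S_{j,i} = g_j '' I_{j,i}`. The output is the pair `(C, S)`. -/
noncomputable def sampleProcQ (α : Type*) [Fintype α] [DecidableEq α] (k n t q : ℕ)
    (hkn : k ≤ n) (hn : n ≤ Fintype.card α) (ht : t * k ≤ n) :
    PMF (Finset α × (Fin q → Fin t → Finset α)) :=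
  haveI hC : Nonempty {C : Finset α // C.card = n} := by
    obtain ⟨s, -, hs⟩ := Finset.exists_subset_card_eq
      (show n ≤ (Finset.univ : Finset α).card by simpa using hn)
    exact ⟨⟨s, hs⟩⟩
  haveI hI : Nonempty {I : Finset (Fin (Fintype.card α)) // I.card = k} := by
    obtain ⟨s, -, hs⟩ := Finset.exists_subset_card_eq
      (show k ≤ (Finset.univ : Finset (Fin (Fintype.card α))).card by
        simpa using (hkn.trans hn))
    exact ⟨⟨s, hs⟩⟩
  (PMF.uniformOfFintype {C : Finset α // C.card = n}).bind fun C =>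
    (PMF.uniformOfFintype
        (Fin q → Fin t → {I : Finset (Fin (Fintype.card α)) // I.card = k})).bind fun I =>
      haveI : ∀ j : Fin q,
          Nonempty {g : ↥(Finset.univ.biUnion fun i => (I j i).1) → α //
            Function.Injective g ∧ ∀ x, g x ∈ C.1} := by
        intro j
        have hU : (Finset.univ.biUnion fun i => (I j i).1).card ≤ n := by
          refine le_trans Finset.card_biUnion_le ?_
          calc ∑ i : Fin t, (I j i).1.card = ∑ _i : Fin t, k :=
                Finset.sum_congr rfl fun i _ => (I j i).2
            _ = t * k := by simp [Finset.sum_const, mul_comm]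
            _ ≤ n := ht
        have hcard :
            Fintype.card ↥(Finset.univ.biUnion fun i => (I j i).1) ≤
              Fintype.card ↥C.1 := by
          rw [Fintype.card_coe, Fintype.card_coe]
          exact hU.trans_eq C.2.symm
        obtain ⟨e⟩ := Function.Embedding.nonempty_of_card_le hcard
        exact ⟨⟨fun x => (e x).1, fun a b hab => e.injective (Subtype.ext hab),
          fun x => (e x).2⟩⟩
      (PMF.uniformOfFintype
          ((j : Fin q) → {g : ↥(Finset.univ.biUnion fun i => (I j i).1) → α //
            Function.Injective g ∧ ∀ x, g x ∈ C.1})).map fun g =>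
        (C.1, fun j i =>
          (I j i).1.attach.image fun x =>
            (g j).1 ⟨x.1, Finset.mem_biUnion.mpr ⟨i, Finset.mem_univ i, x.2⟩⟩)

open Finset
open scoped BigOperators

namespace PMF

variable {β γ : Type*}

noncomputable def expect (p : PMF γ) (F : γ → ℝ) : ℝ := ∑' x, (p x).toReal * F x

variable [Fintype γ]

theorem expect_eq_sum (p : PMF γ) (F : γ → ℝ) : p.expect F = ∑ x, (p x).toReal * F x :=
  tsum_fintype _

theorem sum_toReal_eq_one (p : PMF γ) : ∑ x, (p x).toReal = 1 := by
  rw [← ENNReal.toReal_sum fun x _ => p.apply_ne_top x, ← tsum_fintype (L := .unconditional _),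
    p.tsum_coe, ENNReal.toReal_one]

theorem expect_const (p : PMF γ) (c : ℝ) : p.expect (fun _ => c) = c := by
  rw [expect_eq_sum, ← Finset.sum_mul, sum_toReal_eq_one, one_mul]

theorem expect_sub (p : PMF γ) (F G : γ → ℝ) :
    p.expect (fun x => F x - G x) = p.expect F - p.expect G := by
  simp only [expect_eq_sum, mul_sub, sum_sub_distrib]

theorem expect_mono (p : PMF γ) {F G : γ → ℝ} (h : ∀ x, F x ≤ G x) :
    p.expect F ≤ p.expect G := by
  simp only [expect_eq_sum]
  exact sum_le_sum fun x _ => mul_le_mul_of_nonneg_left (h x) ENNReal.toReal_nonneg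

theorem abs_expect_le (p : PMF γ) (F : γ → ℝ) : |p.expect F| ≤ p.expect fun x => |F x| := by
  simp only [expect_eq_sum]
  refine (abs_sum_le_sum_abs _ _).trans_eq (sum_congr rfl fun x _ => ?_)
  rw [abs_mul, abs_of_nonneg ENNReal.toReal_nonneg]

theorem expect_bind [Fintype β] (p : PMF β) (K : β → PMF γ) (F : γ → ℝ) :
    (p.bind K).expect F = p.expect fun b => (K b).expect F := by
  simp only [expect_eq_sum, bind_apply, tsum_fintype, mul_sum]
  rw [sum_comm]
  refine sum_congr rfl fun x _ => ?_
  rw [ENNReal.toReal_sum fun b _ => ENNReal.mul_ne_top (p.apply_ne_top b) ((K b).apply_ne_top x),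
    sum_mul]
  exact sum_congr rfl fun b _ => by rw [ENNReal.toReal_mul, mul_assoc]

theorem expect_pure (a : γ) (F : γ → ℝ) : (pure a).expect F = F a := by
  classical
  rw [expect_eq_sum, sum_eq_single a (fun b _ hb => by simp [pure_apply_of_ne _ _ hb])
    (fun h => absurd (mem_univ a) h)]
  simp

theorem expect_map [Fintype β] (p : PMF β) (m : β → γ) (F : γ → ℝ) :
    (p.map m).expect F = p.expect (F ∘ m) := by
  rw [← bind_pure_comp, expect_bind]
  simp only [Function.comp_apply, expect_pure]
  rfl

theorem expect_uniformOfFintype [Nonempty γ] (F : γ → ℝ) :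
    (uniformOfFintype γ).expect F = 𝔼 x, F x := by
  rw [expect_eq_sum, Fintype.expect_eq_sum_div_card, div_eq_inv_mul, mul_sum]
  simp [uniformOfFintype_apply, ENNReal.toReal_inv]

theorem iSup_abs_sub_le_expect_iSup {ι : Sort*} [Nonempty ι] (p : PMF γ) (a c : ι → ℝ)
    (F : ι → γ → ℝ) (hF : ∀ i, p.expect (F i) = c i)
    (hbdd : ∀ x, BddAbove (Set.range fun i => |a i - F i x|)) :
    ⨆ i, |a i - c i| ≤ p.expect fun x => ⨆ i, |a i - F i x| :=
  ciSup_le fun i => calc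
    |a i - c i| = |p.expect fun x => a i - F i x| := by rw [expect_sub, expect_const, hF]
    _ ≤ p.expect fun x => |a i - F i x| := abs_expect_le _ _
    _ ≤ p.expect fun x => ⨆ i, |a i - F i x| := expect_mono _ fun x => le_ciSup (hbdd x) i

end PMF

theorem Fintype.expect_apply_eval {ι M : Type*} [Fintype ι] [DecidableEq ι] [AddCommMonoid M]
    [Module ℚ≥0 M] {G : ι → Type*} [∀ j, Fintype (G j)] [∀ j, Nonempty (G j)] (j : ι)
    (h : G j → M) : 𝔼 g : (∀ j, G j), h (g j) = 𝔼 x, h x := by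
  rw [Fintype.expect_equiv (Equiv.piSplitAt j G) (fun g => h (g j)) (fun p => h p.1) fun g => rfl,
    ← univ_product_univ, expect_product]
  simp only [Fintype.expect_const]

theorem Finset.expect_mem_Icc_zero_one {ι : Type*} (s : Finset ι) {F : ι → ℝ}
    (hF : ∀ i ∈ s, F i ∈ Set.Icc 0 1) : 𝔼 i ∈ s, F i ∈ Set.Icc (0 : ℝ) 1 := by
  rcases s.eq_empty_or_nonempty with rfl | hs
  · simp
  · exact ⟨expect_nonneg fun i hi => (hF i hi).1, expect_le hs fun i hi => (hF i hi).2⟩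

theorem Fintype.expect_comp_eq_of_card_fiber_eq {X Y M : Type*} [Fintype X] [Nonempty X]
    [DecidableEq Y] [AddCommMonoid M] [Module ℚ≥0 M] (φ : X → Y) (T : Finset Y)
    (hφ : ∀ x, φ x ∈ T) (hfib : ∀ y ∈ T, ∀ y' ∈ T, #{x | φ x = y} = #{x | φ x = y'})
    (F : Y → M) : 𝔼 x, F (φ x) = 𝔼 y ∈ T, F y := by
  obtain ⟨x₀⟩ := ‹Nonempty X›
  set c := #{x | φ x = φ x₀}
  have hsum : ∑ x, F (φ x) = c • ∑ y ∈ T, F y := by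
    rw [← sum_fiberwise_of_maps_to (fun x _ => hφ x), smul_sum]
    refine Finset.sum_congr rfl fun y hy => ?_
    rw [Finset.sum_congr rfl fun x hx => by rw [(mem_filter.1 hx).2], sum_const,
      hfib y hy _ (hφ x₀)]
  have hcard : #(univ : Finset X) = #T * c := by
    rw [card_eq_sum_card_fiberwise fun x _ => hφ x, sum_const_nat fun y hy =>
      hfib y hy _ (hφ x₀), mul_comm]
  have hc : (c : ℚ≥0) ≠ 0 := Nat.cast_ne_zero.2 (Finset.card_ne_zero.2 ⟨x₀, by simp⟩)
  rw [expect, expect, hsum, hcard, ← Nat.cast_smul_eq_nsmul ℚ≥0, smul_smul, Nat.cast_mul,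
    mul_inv, mul_assoc, inv_mul_cancel₀ hc, mul_one]

section Injections

variable {α D : Type*}

theorem nonempty_injective_mem_of_card_le {U : Finset D} {C : Finset α} (h : #U ≤ #C) :
    Nonempty {g : U → α // Function.Injective g ∧ ∀ x, g x ∈ C} := by
  obtain ⟨e⟩ := Function.Embedding.nonempty_of_card_le
    (by simpa using h : Fintype.card U ≤ Fintype.card C)
  exact ⟨⟨fun x => e x, Subtype.val_injective.comp e.injective, fun x => (e x).2⟩⟩

variable [DecidableEq α]

theorem Qk_eq_expect (k : ℕ) (C : Finset α) (f : Finset α → ℝ) :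
    Qk k C f = 𝔼 S ∈ C.powersetCard k, f S := by
  rw [Qk, expect_eq_sum_div_card, card_powersetCard, div_eq_inv_mul]

theorem exists_perm_image_eq {C T T' : Finset α} (hT : T ⊆ C) (hT' : T' ⊆ C)
    (hcard : #T = #T') : ∃ σ : Equiv.Perm α, (∀ x, σ x ∈ C ↔ x ∈ C) ∧ T.image σ = T' := by
  have hcardC : ∀ {S : Finset α}, S ⊆ C → Fintype.card {x : C // ↑x ∈ S} = #S := fun hS =>
    (Fintype.card_congr ((Equiv.subtypeSubtypeEquivSubtypeInter (· ∈ C) (· ∈ _)).trans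
      (Equiv.subtypeEquivRight fun _ => and_iff_right_of_imp (@hS _)))).trans (Fintype.card_coe _)
  let e : {x : C // ↑x ∈ T} ≃ {x : C // ↑x ∈ T'} :=
    Fintype.equivOfCardEq (by rw [hcardC hT, hcardC hT', hcard])
  refine ⟨Equiv.Perm.ofSubtype e.extendSubtype, Equiv.Perm.ofSubtype_apply_mem_iff_mem _,
    eq_of_subset_of_card_le (fun y hy => ?_) ?_⟩
  · obtain ⟨x, hx, rfl⟩ := mem_image.1 hy
    rw [Equiv.Perm.ofSubtype_apply_of_mem _ (hT hx)]
    exact e.extendSubtype_mem _ hx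
  · rw [card_image_of_injective _ (Equiv.injective _), hcard]

variable [Fintype α] [DecidableEq D]

theorem card_filter_image_eq_of_perm [Fintype D] (s : Finset D) (C : Finset α)
    {T T' : Finset α} (σ : Equiv.Perm α) (hσ : ∀ x, σ x ∈ C ↔ x ∈ C) (hT : T.image σ = T') :
    #{g : {g : D → α // Function.Injective g ∧ ∀ x, g x ∈ C} | s.image g.1 = T} =
      #{g : {g : D → α // Function.Injective g ∧ ∀ x, g x ∈ C} | s.image g.1 = T'} := by
  refine card_equiv (Equiv.subtypeEquiv (Equiv.piCongrRight fun _ => σ) fun g => ?_) fun g => ?_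
  · change _ ↔ Function.Injective (σ ∘ g) ∧ ∀ x, σ (g x) ∈ C
    simp only [σ.injective.of_comp_iff, hσ]
  · simp only [mem_filter, mem_univ, true_and]
    change s.image g.1 = T ↔ s.image (σ ∘ g.1) = T'
    rw [← hT, ← image_image, (image_injective σ.injective).eq_iff]

theorem expect_image_injection_eq_Qk [Fintype D] {k : ℕ} (C : Finset α)
    [Nonempty {g : D → α // Function.Injective g ∧ ∀ x, g x ∈ C}] (s : Finset D) (hs : #s = k)
    (f : Finset α → ℝ) :
    𝔼 g : {g : D → α // Function.Injective g ∧ ∀ x, g x ∈ C}, f (s.image g.1) = Qk k C f := by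
  rw [Qk_eq_expect]
  refine Fintype.expect_comp_eq_of_card_fiber_eq _ _ (fun g => mem_powersetCard.2 ⟨?_, ?_⟩)
    (fun T hT T' hT' => ?_) f
  · exact image_subset_iff.2 fun x _ => g.2.2 x
  · rw [card_image_of_injective _ g.2.1, hs]
  · rw [mem_powersetCard] at hT hT'
    obtain ⟨σ, hσC, hσT⟩ := exists_perm_image_eq hT.1 hT'.1 (hT.2.trans hT'.2.symm)
    exact card_filter_image_eq_of_perm s C σ hσC hσT

theorem expect_image_attach_injection_eq_Qk {U s : Finset D} (hsU : s ⊆ U) {k : ℕ} (hs : #s = k)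
    (C : Finset α) [Nonempty {g : U → α // Function.Injective g ∧ ∀ x, g x ∈ C}]
    (f : Finset α → ℝ) :
    𝔼 g : {g : U → α // Function.Injective g ∧ ∀ x, g x ∈ C},
      f (s.attach.image fun x => g.1 ⟨x.1, hsU x.2⟩) = Qk k C f := by
  have hinj : Function.Injective fun x : s => (⟨x.1, hsU x.2⟩ : U) :=
    fun x y hxy => Subtype.ext (Subtype.mk.inj hxy)
  have himage : ∀ g : {g : U → α // Function.Injective g ∧ ∀ x, g x ∈ C},
      s.attach.image (fun x => g.1 ⟨x.1, hsU x.2⟩) =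
        (s.attach.image fun x => (⟨x.1, hsU x.2⟩ : U)).image g.1 := fun g => by
    rw [image_image]
    rfl
  simp only [himage]
  exact expect_image_injection_eq_Qk C _ (by rw [card_image_of_injective _ hinj, card_attach, hs]) f

end Injections

section Sampling

variable {α : Type*}

noncomputable def blockEstimate {q t : ℕ} (f : Finset α → ℝ) (S : Fin q → Fin t → Finset α) :
    ℝ :=
  1 / ((q * t : ℕ) : ℝ) * ∑ j, ∑ i, f (S j i)

theorem blockEstimate_eq_expect {q t : ℕ} (f : Finset α → ℝ) (S : Fin q → Fin t → Finset α) :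
    blockEstimate f S = 𝔼 j, 𝔼 i, f (S j i) := by
  simp only [blockEstimate, Fintype.expect_eq_sum_div_card, Fintype.card_fin, ← sum_div]
  rw [div_div, one_div_mul_eq_div, Nat.cast_mul, mul_comm]

theorem expect_blockEstimate_injections [DecidableEq α] [Fintype α] {D : Type*} [DecidableEq D]
    {q t k : ℕ} [NeZero q] [NeZero t] (U : Fin q → Finset D) (s : Fin q → Fin t → Finset D)
    (hsU : ∀ j i, s j i ⊆ U j) (hs : ∀ j i, #(s j i) = k) (C : Finset α)
    (hUC : ∀ j, #(U j) ≤ #C) (f : Finset α → ℝ) :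
    𝔼 g : (∀ j, {g : U j → α // Function.Injective g ∧ ∀ x, g x ∈ C}),
      blockEstimate f (fun j i => (s j i).attach.image fun x => (g j).1 ⟨x.1, hsU j i x.2⟩) =
      Qk k C f := by
  have : ∀ j, Nonempty {g : U j → α // Function.Injective g ∧ ∀ x, g x ∈ C} :=
    fun j => nonempty_injective_mem_of_card_le (hUC j)
  have hblock : ∀ j i, 𝔼 g : (∀ j, {g : U j → α // Function.Injective g ∧ ∀ x, g x ∈ C}),
      f ((s j i).attach.image fun x => (g j).1 ⟨x.1, hsU j i x.2⟩) = Qk k C f := by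
    intro j i
    rw [Fintype.expect_apply_eval
      (G := fun j => {g : U j → α // Function.Injective g ∧ ∀ x, g x ∈ C}) j
      fun g => f ((s j i).attach.image fun x => g.1 ⟨x.1, hsU j i x.2⟩)]
    exact expect_image_attach_injection_eq_Qk (hsU j i) (hs j i) C f
  simp only [blockEstimate_eq_expect]
  rw [expect_comm]
  simp only [expect_comm univ (univ : Finset (Fin t)), hblock, Fintype.expect_const]

end Sampling

section Bounds

variable {α : Type*} {f : Finset α → ℝ}

theorem Qk_mem_Icc [DecidableEq α] (hf : ∀ S, f S ∈ Set.Icc 0 1) (k : ℕ) (C : Finset α) :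
    Qk k C f ∈ Set.Icc 0 1 := by
  rw [Qk_eq_expect]
  exact expect_mem_Icc_zero_one _ fun S _ => hf S

theorem blockEstimate_mem_Icc (hf : ∀ S, f S ∈ Set.Icc 0 1) {q t : ℕ}
    (S : Fin q → Fin t → Finset α) : blockEstimate f S ∈ Set.Icc 0 1 := by
  rw [blockEstimate_eq_expect]
  exact expect_mem_Icc_zero_one _ fun j _ => expect_mem_Icc_zero_one _ fun i _ => hf (S j i)

theorem abs_Qk_sub_blockEstimate_le_one [DecidableEq α] (hf : ∀ S, f S ∈ Set.Icc 0 1) (k : ℕ)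
    (C : Finset α) {q t : ℕ} (S : Fin q → Fin t → Finset α) : |Qk k C f - blockEstimate f S| ≤ 1 :=
  abs_sub_le_of_nonneg_of_le (Qk_mem_Icc hf k C).1 (Qk_mem_Icc hf k C).2
    (blockEstimate_mem_Icc hf S).1 (blockEstimate_mem_Icc hf S).2

end Bounds

theorem inv_choose_mul_sum_powersetCard_eq_expect {α : Type*} [Fintype α] (n : ℕ)
    (F : Finset α → ℝ) :
    ((Fintype.card α).choose n : ℝ)⁻¹ * ∑ C ∈ (univ : Finset α).powersetCard n, F C =
      𝔼 C : {C : Finset α // #C = n}, F C := by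
  rw [Fintype.expect_eq_sum_div_card, Fintype.card_finset_len, div_eq_inv_mul,
    sum_subtype _ fun C => mem_powersetCard_univ]

theorem inv_choose_mul_sum_iSup_abs_le_expect_sampleProcQ {α : Type*} [Fintype α] [DecidableEq α]
    {k n t : ℕ} (q : ℕ) [NeZero q] [NeZero t] (hkn : k ≤ n) (hn : n ≤ Fintype.card α)
    (ht : t * k ≤ n) (H : Set (Finset α → ℝ)) [Nonempty H]
    (hH : ∀ f ∈ H, ∀ S, f S ∈ Set.Icc (0 : ℝ) 1) :
    ((Fintype.card α).choose n : ℝ)⁻¹ *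
        ∑ C ∈ (univ : Finset α).powersetCard n, ⨆ f : H, |Qk k univ f.1 - Qk k C f.1| ≤
      (sampleProcQ α k n t q hkn hn ht).expect
        fun x => ⨆ f : H, |Qk k univ f.1 - blockEstimate f.1 x.2| := by
  rw [inv_choose_mul_sum_powersetCard_eq_expect, sampleProcQ, PMF.expect_bind]
  simp only [PMF.expect_uniformOfFintype]
  refine expect_le_expect fun C _ => PMF.iSup_abs_sub_le_expect_iSup _ _ _ _ (fun f => ?_)
    fun x => ⟨1, ?_⟩
  · rw [PMF.expect_bind]
    refine (congrArg _ (funext fun I => ?_)).trans (PMF.expect_const _ _)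
    rw [PMF.expect_map]
    simp only [PMF.expect_uniformOfFintype, Function.comp_apply]
    refine expect_blockEstimate_injections (fun j => univ.biUnion fun i => (I j i).1)
      (fun j i => (I j i).1) (fun j i => subset_biUnion_of_mem (fun i => (I j i).1) (mem_univ i))
      (fun j i => (I j i).2) C.1 (fun j => ?_) f.1
    calc #(univ.biUnion fun i => (I j i).1) ≤ #(univ : Finset (Fin t)) * k :=
          card_biUnion_le_card_mul _ _ _ fun i _ => (I j i).2.le
      _ ≤ #C.1 := by rw [card_univ, Fintype.card_fin, C.2]; exact ht
  · rintro _ ⟨f, rfl⟩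
    exact abs_Qk_sub_blockEstimate_le_one (hH f.1 f.2) _ _ _

theorem stmt15_general {α : Type*} [Fintype α] [DecidableEq α] (N k n : ℕ)
    (hN : Fintype.card α = N) (hk : 1 ≤ k) (hkn : k ≤ n) (hn : n ≤ Fintype.card α)
    (H : Set (Finset α → ℝ)) (hH : H.Nonempty)
    (hbool : ∀ f ∈ H, ∀ S : Finset α, f S = 0 ∨ f S = 1) :
    (N.choose n : ℝ)⁻¹ *
        ∑ C ∈ (Finset.univ : Finset α).powersetCard n,
          (⨆ f : H, |Qk k Finset.univ f.1 - Qk k C f.1|) ≤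
      Filter.limsup
        (fun q : ℕ =>
          ∑' x : Finset α × (Fin q → Fin (n / k) → Finset α),
            ((sampleProcQ α k n (n / k) q hkn hn (Nat.div_mul_le_self n k)) x).toReal *
              (⨆ f : H, |Qk k Finset.univ f.1 -
                (1 / ((q * (n / k) : ℕ) : ℝ)) * ∑ j, ∑ i, f.1 (x.2 j i)|))
        Filter.atTop := by
  subst hN
  have : Nonempty H := hH.to_subtype
  have : NeZero (n / k) := ⟨(Nat.div_pos hkn hk).ne'⟩
  have hH01 : ∀ f ∈ H, ∀ S, f S ∈ Set.Icc (0 : ℝ) 1 := fun f hf S => by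
    rcases hbool f hf S with h | h <;> simp [h]
  refine Filter.le_limsup_of_frequently_le
    (Filter.eventually_atTop.2 ⟨1, fun q hq => ?_⟩).frequently
    (Filter.isBoundedUnder_of ⟨1, fun q => ?_⟩)
  · have : NeZero q := ⟨by omega⟩
    exact inv_choose_mul_sum_iSup_abs_le_expect_sampleProcQ q hkn hn _ H hH01
  · show (sampleProcQ α k n (n / k) q hkn hn (Nat.div_mul_le_self n k)).expect
      (fun x => ⨆ f : H, |Qk k univ f.1 - blockEstimate f.1 x.2|) ≤ 1
    refine (PMF.expect_mono _ fun x => ?_).trans_eq (PMF.expect_const _ 1)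
    exact ciSup_le fun f => abs_Qk_sub_blockEstimate_le_one (hH01 f.1 f.2) k univ x.2

/-- Lemma 2 of the paper: for a nonempty class `H` of `{0,1}`-valued hypotheses with finite VC
dimension, the expected uniform estimation error over a uniformly random size-`n` subset `C` of
`α` is at most the `limsup`, as `q → ∞`, of the expected uniform deviation of the block estimates
`(1/(q·t))·∑_{j,i} f(S_{j,i})` (with `t = ⌊n/k⌋`) produced by the sampling process from
Lemma 1. -/
theorem stmt15 {α : Type*} [Fintype α] [DecidableEq α] (N k n : ℕ)
    (hN : Fintype.card α = N) (hk : 1 ≤ k) (hkn : k ≤ n) (hn : n ≤ Fintype.card α)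
    (H : Set (Finset α → ℝ)) (hH : H.Nonempty)
    (hbool : ∀ f ∈ H, ∀ S : Finset α, f S = 0 ∨ f S = 1)
    (hVC : ∃ d : ℕ, VCDimEq k H d) :
    (N.choose n : ℝ)⁻¹ *
        ∑ C ∈ (Finset.univ : Finset α).powersetCard n,
          (⨆ f : H, |Qk k Finset.univ f.1 - Qk k C f.1|) ≤
      Filter.limsup
        (fun q : ℕ =>
          ∑' x : Finset α × (Fin q → Fin (n / k) → Finset α),
            ((sampleProcQ α k n (n / k) q hkn hn (Nat.div_mul_le_self n k)) x).toReal *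
              (⨆ f : H, |Qk k Finset.univ f.1 -
                (1 / ((q * (n / k) : ℕ) : ℝ)) * ∑ j, ∑ i, f.1 (x.2 j i)|))
        Filter.atTop :=
  stmt15_general N k n hN hk hkn hn H hH hbool
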